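/- Let H be a countable abelian group and σ : H∖{0} → ℝ a summable symmetric function (σ(−κ)=σ(κ)) such that ∑_{κ≠0} (1 − Re θ(κ))·σ(κ) = 0 for every character θ of H. Then σ = 0. -/

import Mathlib

/-!
Subtracting `(∑ σ) δ₀` from `σ` gives a summable function `μ` whose Fourier transform
`θ ↦ ∑ μ(κ) θ(κ)` vanishes at every character: symmetry of `σ` makes `∑ σ(κ) θ(κ)` real, and the
hypothesis identifies its real part with `∑ σ`. The Fourier transform is injective on `ℓ¹` of a
countable abelian group: integrating `(∑ μ(κ) θ(κ)) · conj θ(κ₀)` against Haar measure on the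
compact dual group picks out `μ(κ₀)`, since characters separate points and a nontrivial character
integrates to zero. Hence `μ = 0`, i.e. `σ = 0` away from `0`.
-/

open MeasureTheory ComplexConjugate

theorem integral_monoidHom_eq_zero {K 𝕜 : Type*} [Group K] [MeasurableSpace K] [MeasurableMul K]
    [RCLike 𝕜] {μ : Measure K} [μ.IsMulLeftInvariant] (φ : K →* 𝕜) {k : K} (hk : φ k ≠ 1) :
    ∫ x, φ x ∂μ = 0 := by
  have h : φ k * ∫ x, φ x ∂μ = ∫ x, φ x ∂μ := by
    simpa only [map_mul, integral_const_mul] using integral_mul_left_eq_self (μ := μ) (⇑φ) k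
  have : (φ k - 1) * ∫ x, φ x ∂μ = 0 := by rw [sub_mul, one_mul, h, sub_self]
  exact (mul_eq_zero.1 this).resolve_left (sub_ne_zero.2 hk)

noncomputable def AddCircle.ratToCircle : AddChar (AddCircle (1 : ℚ)) Circle :=
  AddCircle.toCircle_addChar.compAddMonoidHom <|
    QuotientAddGroup.map (AddSubgroup.zmultiples 1) (AddSubgroup.zmultiples 1)
      (Rat.castHom ℝ).toAddMonoidHom <| by simp [AddSubgroup.zmultiples_le]

lemma AddCircle.eq_zero_of_ratToCircle_eq_one {x : AddCircle (1 : ℚ)}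
    (hx : AddCircle.ratToCircle x = 1) : x = 0 := by
  induction x using QuotientAddGroup.induction_on with
  | H q =>
    have h : ((q : ℝ) : AddCircle (1 : ℝ)) = 0 :=
      AddCircle.injective_toCircle one_ne_zero (hx.trans AddCircle.toCircle_zero.symm :)
    obtain ⟨n, hn⟩ := (AddCircle.coe_eq_zero_iff _).1 h
    refine (AddCircle.coe_eq_zero_iff _).2 ⟨n, ?_⟩
    simp only [zsmul_eq_mul, mul_one] at hn ⊢
    exact_mod_cast hn

namespace PontryaginDual

variable {G : Type*} [CommGroup G] [TopologicalSpace G]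

@[fun_prop]
lemma continuous_apply (g : G) : Continuous fun χ : PontryaginDual G => χ g :=
  continuous_eval_const (F := G →ₜ* Circle) g

noncomputable def evalHom (g : G) : PontryaginDual G →* ℂ where
  toFun χ := ((χ g : Circle) : ℂ)
  map_one' := rfl
  map_mul' _ _ := rfl

variable [DiscreteTopology G]

lemma exists_apply_ne_one {g : G} (hg : g ≠ 1) : ∃ χ : PontryaginDual G, χ g ≠ 1 := by
  obtain ⟨c, hc⟩ := CharacterModule.exists_character_apply_ne_zero_of_ne_zero
    (a := Additive.ofMul g) hg
  exact ⟨⟨(AddCircle.ratToCircle.compAddMonoidHom c).toMonoidHom, continuous_of_discreteTopology⟩,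
    fun h => hc (AddCircle.eq_zero_of_ratToCircle_eq_one h)⟩

section Integral

variable [MeasurableSpace (PontryaginDual G)] [BorelSpace (PontryaginDual G)]
  (μ : Measure (PontryaginDual G)) [μ.IsMulLeftInvariant]

theorem integral_apply_mul_conj_apply_of_ne {g g₀ : G} (h : g ≠ g₀) :
    ∫ χ : PontryaginDual G, ((χ g : Circle) : ℂ) * conj ((χ g₀ : Circle) : ℂ) ∂μ = 0 := by
  have hχ : ∀ χ : PontryaginDual G,
      ((χ g : Circle) : ℂ) * conj ((χ g₀ : Circle) : ℂ) = evalHom (g * g₀⁻¹) χ := by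
    intro χ
    show _ = ((χ (g * g₀⁻¹) : Circle) : ℂ)
    rw [_root_.map_mul, map_inv, Circle.coe_mul, Circle.coe_inv_eq_conj]
  simp_rw [hχ]
  obtain ⟨ψ, hψ⟩ := exists_apply_ne_one (mul_inv_eq_one.not.2 h)
  exact integral_monoidHom_eq_zero _ (k := ψ) fun h1 => hψ (Circle.coe_eq_one.1 h1)

theorem integral_tsum_mul_apply_mul_conj_apply [Countable G] [IsFiniteMeasure μ] {f : G → ℂ}
    (hf : Summable f) (g₀ : G) :
    ∫ χ : PontryaginDual G, (∑' g, f g * ((χ g : Circle) : ℂ)) * conj ((χ g₀ : Circle) : ℂ) ∂μ =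
      μ.real Set.univ * f g₀ := by
  set F : G → PontryaginDual G → ℂ :=
    fun g χ => f g * ((χ g : Circle) : ℂ) * conj ((χ g₀ : Circle) : ℂ)
  have hF_norm : ∀ g χ, ‖F g χ‖ = ‖f g‖ := by simp [F, Circle.norm_coe]
  have hF_int : ∀ g, Integrable (F g) μ := fun g =>
    .of_bound (Continuous.aestronglyMeasurable (by fun_prop)) ‖f g‖
      (.of_forall fun χ => (hF_norm g χ).le)
  calc ∫ χ, (∑' g, f g * ((χ g : Circle) : ℂ)) * conj ((χ g₀ : Circle) : ℂ) ∂μ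
      = ∫ χ, ∑' g, F g χ ∂μ := by simp_rw [F, tsum_mul_right]
    _ = ∑' g, ∫ χ, F g χ ∂μ := (integral_tsum_of_summable_integral_norm hF_int
          (by simpa [hF_norm] using hf.norm.mul_left (μ.real Set.univ))).symm
    _ = ∫ χ, F g₀ χ ∂μ := tsum_eq_single g₀ fun g hg => by
          simp_rw [F, mul_assoc, integral_const_mul, integral_apply_mul_conj_apply_of_ne μ hg,
            mul_zero]
    _ = μ.real Set.univ * f g₀ := by simp [F, mul_assoc, Complex.mul_conj, mul_comm]

end Integral

theorem eq_zero_of_forall_tsum_mul_apply_eq_zero [Countable G] {f : G → ℂ} (hf : Summable f)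
    (h : ∀ χ : PontryaginDual G, ∑' g, f g * ((χ g : Circle) : ℂ) = 0) : f = 0 := by
  borelize (PontryaginDual G)
  funext g₀
  have key := integral_tsum_mul_apply_mul_conj_apply Measure.haar hf g₀
  simp only [h, zero_mul, integral_zero] at key
  exact (mul_eq_zero.1 key.symm).resolve_left (by exact_mod_cast measureReal_univ_ne_zero)

end PontryaginDual

theorem AddChar.eq_zero_of_forall_tsum_mul_eq_zero {H : Type*} [AddCommGroup H] [Countable H]
    {f : H → ℂ} (hf : Summable f) (h : ∀ θ : AddChar H Circle, ∑' κ, f κ * θ κ = 0) : f = 0 := by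
  -- characters of `H` are the continuous characters of the discrete group `Multiplicative H`
  let _ : TopologicalSpace (Multiplicative H) := ⊥
  have _ : DiscreteTopology (Multiplicative H) := ⟨rfl⟩
  have _ : Countable (Multiplicative H) := ‹Countable H›
  have hf' := PontryaginDual.eq_zero_of_forall_tsum_mul_apply_eq_zero (G := Multiplicative H)
    (Multiplicative.toAdd.summable_iff.2 hf) fun χ => h (toMonoidHomEquiv.symm χ.toMonoidHom)
  exact funext fun κ => congrFun hf' (.ofAdd κ)

theorem Function.Even.hasSum_ofReal_mul {H 𝕜 : Type*} [InvolutiveNeg H] [RCLike 𝕜] {σ : H → ℝ}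
    (hσ : σ.Even) (hsum : Summable σ) {θ : H → 𝕜} (hθ : ∀ κ, θ (-κ) = conj (θ κ))
    (hθ_le : ∀ κ, ‖θ κ‖ ≤ 1) :
    HasSum (fun κ => (σ κ : 𝕜) * θ κ) (∑' κ, σ κ * RCLike.re (θ κ) : ℝ) := by
  have hs : Summable fun κ => (σ κ : 𝕜) * θ κ :=
    hsum.norm.of_norm_bounded fun κ => by
      simpa [norm_mul] using mul_le_of_le_one_right (norm_nonneg (σ κ)) (hθ_le κ)
  have hconj : conj (∑' κ, (σ κ : 𝕜) * θ κ) = ∑' κ, (σ κ : 𝕜) * θ κ := by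
    rw [RCLike.conj_tsum, ← (Equiv.neg H).tsum_eq]
    simp [hσ.eq, hθ]
  convert hs.hasSum using 1
  rw [← RCLike.conj_eq_iff_re.1 hconj, RCLike.re_tsum _ hs]
  simp

theorem hasSum_sub_single_tsum_mul_eq_zero {H : Type*} [AddGroup H] [DecidableEq H] {σ : H → ℝ}
    (hσ : σ.Even) (hsum : Summable σ) (θ : AddChar H Circle)
    (hθ : ∑' κ, (1 - ((θ κ : Circle) : ℂ).re) * σ κ = 0) :
    HasSum (fun κ => ((σ - Pi.single 0 (∑' κ, σ κ) : H → ℝ) κ : ℂ) * θ κ) 0 := by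
  have hσθ := hσ.hasSum_ofReal_mul hsum (θ := fun κ => ((θ κ : Circle) : ℂ))
    (fun κ => by rw [AddChar.map_neg_eq_inv, Circle.coe_inv_eq_conj])
    (fun κ => (Circle.norm_coe _).le)
  have hre : ∑' κ, σ κ * ((θ κ : Circle) : ℂ).re = ∑' κ, σ κ := by
    have hsub := hsum.hasSum.sub (by simpa using Complex.hasSum_re hσθ)
    have h' : ∑' κ, (σ κ - σ κ * ((θ κ : Circle) : ℂ).re) = 0 := by
      rw [← hθ]; congr 1; ext κ; ring
    linarith [hsub.tsum_eq]
  have hδ : HasSum (fun κ => ((Pi.single 0 (∑' κ, σ κ) : H → ℝ) κ : ℂ) * θ κ) (∑' κ, σ κ : ℝ) := by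
    simpa using hasSum_single (f := fun κ => ((Pi.single 0 (∑' κ, σ κ) : H → ℝ) κ : ℂ) * θ κ) 0
      fun κ hκ => by simp [hκ]
  simpa [hre, sub_mul] using hσθ.sub hδ

/-- If a summable symmetric `σ` on `H \ {0}` (encoded by `σ 0 = 0`) satisfies
`∑_κ (1 - Re θ(κ)) σ(κ) = 0` for every character `θ` of `H`, then `σ = 0`. -/
theorem stmt18 {H : Type*} [AddCommGroup H] [Countable H]
    (σ : H → ℝ) (hσ0 : σ 0 = 0) (hsym : ∀ κ, σ (-κ) = σ κ) (hsum : Summable σ)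
    (hvanish : ∀ θ : H → ℂ, θ 0 = 1 → (∀ a b, θ (a + b) = θ a * θ b) →
      (∀ a, ‖θ a‖ = 1) → ∑' κ, (1 - (θ κ).re) * σ κ = 0) :
    ∀ κ, σ κ = 0 := by
  classical
  have hμ_sum : Summable fun κ => ((σ - Pi.single 0 (∑' κ, σ κ) : H → ℝ) κ : ℂ) :=
    Complex.summable_ofReal.2 (hsum.sub (hasSum_pi_single 0 _).summable)
  have hμ := AddChar.eq_zero_of_forall_tsum_mul_eq_zero hμ_sum fun θ =>
    (hasSum_sub_single_tsum_mul_eq_zero hsym hsum θ <| hvanish (fun a => θ a) (by simp)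
      (fun a b => by simp [AddChar.map_add_eq_mul]) (fun a => Circle.norm_coe _)).tsum_eq
  intro κ
  rcases eq_or_ne κ 0 with rfl | hκ
  · exact hσ0
  simpa [hκ] using congrFun hμ κ
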